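/- arXiv:1605.01563 — 3 statements merged into one kernel-verified Lean document; each statement's English description precedes it below -/
import Mathlib

section
/- For 4 × 4 real matrices A, B define P(A, B) := Σ_{τ ∈ S_4} sgn(τ) ( A_{τ(1)τ(2)} B_{τ(3)τ(4)} + A_{τ(3)τ(4)} B_{τ(1)τ(2)} ), where the sum is over all permutations τ of {1,2,3,4} and A_{ij} denotes the (i,j) entry. Then for every h ∈ SO(4) (i.e. h^T h = I and det h = 1) and every skew-symmetric 4 × 4 real matrix X, one has P(h^{-1} X h, X) = P(h X h^{-1}, X). -/
open Matrix

/-- The polarized Pfaffian-type form on 4 × 4 matrices: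
`P(A, B) = Σ_{τ ∈ S₄} sgn(τ) (A_{τ(1)τ(2)} B_{τ(3)τ(4)} + A_{τ(3)τ(4)} B_{τ(1)τ(2)})`
(indices written 0-based). -/
noncomputable def Pform (A B : Matrix (Fin 4) (Fin 4) ℝ) : ℝ :=
  ∑ τ : Equiv.Perm (Fin 4),
    ((Equiv.Perm.sign τ : ℤ) : ℝ) *
      (A (τ 0) (τ 1) * B (τ 2) (τ 3) + A (τ 2) (τ 3) * B (τ 0) (τ 1))


open Finset Equiv

lemma entry_expand (g A : Matrix (Fin 4) (Fin 4) ℝ) (p q : Fin 4) :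
    (g * A * gᵀ) p q = ∑ x : Fin 4 × Fin 4, A x.1 x.2 * (g p x.1 * g q x.2) := by
  simp only [Matrix.mul_apply, Matrix.transpose_apply, Finset.sum_mul, Fintype.sum_prod_type]
  rw [Finset.sum_comm]
  exact Finset.sum_congr rfl fun i _ => Finset.sum_congr rfl fun j _ => by ring

lemma det_sub (g : Matrix (Fin 4) (Fin 4) ℝ) (f : Fin 4 → Fin 4) :
    (g.submatrix id f).det = ∑ τ : Equiv.Perm (Fin 4), ((Equiv.Perm.sign τ : ℤ) : ℝ) *
      (g (τ 0) (f 0) * g (τ 1) (f 1) * g (τ 2) (f 2) * g (τ 3) (f 3)) := by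
  rw [Matrix.det_apply]
  refine Finset.sum_congr rfl fun τ _ => ?_
  rw [Fin.prod_univ_four]
  simp [Units.smul_def, zsmul_eq_mul, Matrix.submatrix_apply]

lemma step_expand (g A B : Matrix (Fin 4) (Fin 4) ℝ) :
    Pform (g * A * gᵀ) (g * B * gᵀ) =
      ∑ τ : Equiv.Perm (Fin 4), ∑ x : Fin 4 × Fin 4, ∑ y : Fin 4 × Fin 4,
        (A x.1 x.2 * B y.1 y.2 + A y.1 y.2 * B x.1 x.2) *
          (((Equiv.Perm.sign τ : ℤ) : ℝ) *
            (g (τ 0) x.1 * g (τ 1) x.2 * g (τ 2) y.1 * g (τ 3) y.2)) := by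
  unfold Pform
  refine Finset.sum_congr rfl fun τ _ => ?_
  rw [entry_expand g A (τ 0) (τ 1), entry_expand g B (τ 2) (τ 3),
      entry_expand g A (τ 2) (τ 3), entry_expand g B (τ 0) (τ 1),
      Finset.sum_mul_sum, Finset.sum_mul_sum]
  rw [mul_add]
  simp only [Finset.mul_sum]
  rw [Finset.sum_comm (γ := Fin 4 × Fin 4)
    (f := fun (x y : Fin 4 × Fin 4) => ((Equiv.Perm.sign τ : ℤ) : ℝ) *
      (A x.1 x.2 * (g (τ 2) x.1 * g (τ 3) x.2) * (B y.1 y.2 * (g (τ 0) y.1 * g (τ 1) y.2))))]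
  rw [← Finset.sum_add_distrib]
  refine Finset.sum_congr rfl fun x _ => ?_
  rw [← Finset.sum_add_distrib]
  exact Finset.sum_congr rfl fun y _ => by ring

lemma vec_eval (a b c d : Fin 4) :
    ![a, b, c, d] 0 = a ∧ ![a, b, c, d] 1 = b ∧ ![a, b, c, d] 2 = c ∧ ![a, b, c, d] 3 = d := by
  refine ⟨rfl, rfl, rfl, rfl⟩

lemma step_det (g A B : Matrix (Fin 4) (Fin 4) ℝ) :
    (∑ τ : Equiv.Perm (Fin 4), ∑ x : Fin 4 × Fin 4, ∑ y : Fin 4 × Fin 4,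
        (A x.1 x.2 * B y.1 y.2 + A y.1 y.2 * B x.1 x.2) *
          (((Equiv.Perm.sign τ : ℤ) : ℝ) *
            (g (τ 0) x.1 * g (τ 1) x.2 * g (τ 2) y.1 * g (τ 3) y.2))) =
    ∑ x : Fin 4 × Fin 4, ∑ y : Fin 4 × Fin 4,
        (A x.1 x.2 * B y.1 y.2 + A y.1 y.2 * B x.1 x.2) *
          (g.submatrix id ![x.1, x.2, y.1, y.2]).det := by
  rw [Finset.sum_comm]
  refine Finset.sum_congr rfl fun x _ => ?_
  rw [Finset.sum_comm]
  refine Finset.sum_congr rfl fun y _ => ?_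
  rw [det_sub, Finset.mul_sum]
  refine Finset.sum_congr rfl fun τ _ => ?_
  obtain ⟨h0, h1, h2, h3⟩ := vec_eval x.1 x.2 y.1 y.2
  rw [h0, h1, h2, h3]

lemma coe_perm (σ : Equiv.Perm (Fin 4)) : ![σ 0, σ 1, σ 2, σ 3] = ⇑σ := by
  funext i
  fin_cases i <;> rfl

set_option maxHeartbeats 1000000 in
lemma step_perm (g A B : Matrix (Fin 4) (Fin 4) ℝ) :
    (∑ x : Fin 4 × Fin 4, ∑ y : Fin 4 × Fin 4,
        (A x.1 x.2 * B y.1 y.2 + A y.1 y.2 * B x.1 x.2) *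
          (g.submatrix id ![x.1, x.2, y.1, y.2]).det) = g.det * Pform A B := by
  rw [← Finset.sum_product' (f := fun (x y : Fin 4 × Fin 4) =>
    (A x.1 x.2 * B y.1 y.2 + A y.1 y.2 * B x.1 x.2) *
      (g.submatrix id ![x.1, x.2, y.1, y.2]).det), Finset.univ_product_univ]
  have hv : ∀ q ∈ (Finset.univ : Finset ((Fin 4 × Fin 4) × (Fin 4 × Fin 4))),
      (A q.1.1 q.1.2 * B q.2.1 q.2.2 + A q.2.1 q.2.2 * B q.1.1 q.1.2) *
        (g.submatrix id ![q.1.1, q.1.2, q.2.1, q.2.2]).det ≠ 0 →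
      Function.Injective ![q.1.1, q.1.2, q.2.1, q.2.2] := by
    intro q _ hne
    by_contra hinj
    apply hne
    rw [Function.not_injective_iff] at hinj
    obtain ⟨a, b, hab, hne'⟩ := hinj
    rw [Matrix.det_zero_of_column_eq hne'
      (fun k => by simp [Matrix.submatrix_apply, hab]), mul_zero]
  rw [← Finset.sum_filter_of_ne hv]
  rw [Pform, Finset.mul_sum]
  symm
  refine Finset.sum_bij (fun (σ : Equiv.Perm (Fin 4)) _ => ((σ 0, σ 1), (σ 2, σ 3)))
    ?_ ?_ ?_ ?_
  · intro σ _
    simp only [Finset.mem_filter, Finset.mem_univ, true_and]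
    have : ![((σ 0, σ 1), (σ 2, σ 3)).1.1, ((σ 0, σ 1), (σ 2, σ 3)).1.2,
        ((σ 0, σ 1), (σ 2, σ 3)).2.1, ((σ 0, σ 1), (σ 2, σ 3)).2.2] = ⇑σ := coe_perm σ
    rw [this]
    exact σ.injective
  · intro σ1 _ σ2 _ hq
    simp only [Prod.mk.injEq] at hq
    obtain ⟨⟨h0, h1⟩, h2, h3⟩ := hq
    refine Equiv.ext fun i => ?_
    fin_cases i
    exacts [h0, h1, h2, h3]
  · intro q hq
    simp only [Finset.mem_filter, Finset.mem_univ, true_and] at hq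
    have hbij : Function.Bijective ![q.1.1, q.1.2, q.2.1, q.2.2] :=
      Finite.injective_iff_bijective.mp hq
    refine ⟨Equiv.ofBijective _ hbij, Finset.mem_univ _, ?_⟩
    obtain ⟨h0, h1, h2, h3⟩ := vec_eval q.1.1 q.1.2 q.2.1 q.2.2
    have e0 : Equiv.ofBijective _ hbij 0 = q.1.1 := h0
    have e1 : Equiv.ofBijective _ hbij 1 = q.1.2 := h1
    have e2 : Equiv.ofBijective _ hbij 2 = q.2.1 := h2
    have e3 : Equiv.ofBijective _ hbij 3 = q.2.2 := h3
    show ((Equiv.ofBijective _ hbij 0, Equiv.ofBijective _ hbij 1),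
      (Equiv.ofBijective _ hbij 2, Equiv.ofBijective _ hbij 3)) = q
    rw [e0, e1, e2, e3]
  · intro σ _
    have hc : ![((σ 0, σ 1), (σ 2, σ 3)).1.1, ((σ 0, σ 1), (σ 2, σ 3)).1.2,
        ((σ 0, σ 1), (σ 2, σ 3)).2.1, ((σ 0, σ 1), (σ 2, σ 3)).2.2] = ⇑σ := coe_perm σ
    rw [hc, Matrix.det_permute']
    push_cast
    ring

lemma Pform_key (g A B : Matrix (Fin 4) (Fin 4) ℝ) :
    Pform (g * A * gᵀ) (g * B * gᵀ) = g.det * Pform A B := by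
  rw [step_expand, step_det, step_perm]

lemma Pform_comm (A B : Matrix (Fin 4) (Fin 4) ℝ) : Pform A B = Pform B A :=
  Finset.sum_congr rfl fun τ _ => by ring

/-- For `h ∈ SO(4)` (`hᵀ h = 1`, `det h = 1`) and skew-symmetric `X`,
`P(h⁻¹ X h, X) = P(h X h⁻¹, X)`. -/
theorem Pform_conj_symm (h X : Matrix (Fin 4) (Fin 4) ℝ)
    (hh : hᵀ * h = 1) (hdet : h.det = 1) (hX : Xᵀ = -X) :
    Pform (h⁻¹ * X * h) X = Pform (h * X * h⁻¹) X := by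
  have hinv : h⁻¹ = hᵀ := Matrix.inv_eq_left_inv hh
  have hh' : h * hᵀ = 1 := mul_eq_one_comm.mp hh
  rw [hinv]
  have key := Pform_key h (hᵀ * X * h) X
  have hXeq : h * (hᵀ * X * h) * hᵀ = X := by
    calc h * (hᵀ * X * h) * hᵀ = (h * hᵀ) * X * (h * hᵀ) := by
          simp only [Matrix.mul_assoc]
      _ = X := by rw [hh', Matrix.one_mul, Matrix.mul_one]
  rw [hXeq, hdet, one_mul] at key
  rw [← key, Pform_comm]
end

section
/- For every h ∈ SO(4) (i.e. h is a real 4 × 4 matrix with h^T h = I and det h = 1) and every skew-symmetric 4 × 4 real matrix X, the following sum over all permutations τ of {1,2,3,4} vanishes: Σ_{τ ∈ S_4} sgn(τ) [ X_{τ(1)τ(2)} X_{τ(3)τ(4)} + X_{τ(3)τ(4)} X_{τ(1)τ(2)} + (h^{-1} X h)_{τ(1)τ(2)} X_{τ(3)τ(4)} + (h^{-1} X h)_{τ(3)τ(4)} X_{τ(1)τ(2)} − (h X h^{-1})_{τ(1)τ(2)} X_{τ(3)τ(4)} − (h X h^{-1})_{τ(3)τ(4)} X_{τ(1)τ(2)}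 − X_{τ(1)τ(2)} X_{τ(3)τ(4)} − X_{τ(3)τ(4)} X_{τ(1)τ(2)} ] = 0, where A_{ij} denotes the (i,j) entry of the matrix A. -/
open Matrix

section ContractionMuAux

/-- The Pfaffian-type pairing `S A B = Σ_τ sgn τ · A_{τ0 τ1} B_{τ2 τ3}`. -/
noncomputable def pfPair (A B : Matrix (Fin 4) (Fin 4) ℝ) : ℝ :=
  ∑ τ : Equiv.Perm (Fin 4),
    ((Equiv.Perm.sign τ : ℤ) : ℝ) * (A (τ 0) (τ 1) * B (τ 2) (τ 3))

lemma pfPair_symm (A B : Matrix (Fin 4) (Fin 4) ℝ) : pfPair A B = pfPair B A := by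
  unfold pfPair
  have hsgn : Equiv.Perm.sign ((Equiv.swap 0 2 : Equiv.Perm (Fin 4)) * Equiv.swap 1 3) = 1 := by
    decide
  have h0 : ((Equiv.swap (0 : Fin 4) 2 * Equiv.swap 1 3 : Equiv.Perm (Fin 4))) 0 = 2 := by decide
  have h1 : ((Equiv.swap (0 : Fin 4) 2 * Equiv.swap 1 3 : Equiv.Perm (Fin 4))) 1 = 3 := by decide
  have h2 : ((Equiv.swap (0 : Fin 4) 2 * Equiv.swap 1 3 : Equiv.Perm (Fin 4))) 2 = 0 := by decide
  have h3 : ((Equiv.swap (0 : Fin 4) 2 * Equiv.swap 1 3 : Equiv.Perm (Fin 4))) 3 = 1 := by decide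
  refine Fintype.sum_equiv
    (Equiv.mulRight ((Equiv.swap 0 2 : Equiv.Perm (Fin 4)) * Equiv.swap 1 3)) _ _ fun τ => ?_
  simp only [Equiv.coe_mulRight, Equiv.Perm.mul_apply, Equiv.Perm.sign_mul, hsgn, mul_one,
    h0, h1, h2, h3]
  ring

/-- Column expansion of the determinant. -/
lemma det_col_expand (M : Matrix (Fin 4) (Fin 4) ℝ) :
    M.det = ∑ τ : Equiv.Perm (Fin 4), ((Equiv.Perm.sign τ : ℤ) : ℝ) * ∏ i, M i (τ i) := by
  rw [← Matrix.det_transpose, Matrix.det_apply']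
  simp [Matrix.transpose_apply]

/-- An equivalence packaging a function `Fin 4 → Fin 4` as a quadruple. -/
def quadEquiv : (Fin 4 × Fin 4 × Fin 4 × Fin 4) ≃ (Fin 4 → Fin 4) where
  toFun p := ![p.1, p.2.1, p.2.2.1, p.2.2.2]
  invFun v := (v 0, v 1, v 2, v 3)
  left_inv p := rfl
  right_inv v := by
    funext i
    fin_cases i <;> rfl

lemma sum_fun_eq (F : (Fin 4 → Fin 4) → ℝ) :
    ∑ v : Fin 4 → Fin 4, F v = ∑ k, ∑ l, ∑ m, ∑ n, F ![k, l, m, n] := by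
  rw [← Equiv.sum_comp quadEquiv F]
  rw [Fintype.sum_prod_type]
  refine Finset.sum_congr rfl fun k _ => ?_
  rw [Fintype.sum_prod_type]
  refine Finset.sum_congr rfl fun l _ => ?_
  rw [Fintype.sum_prod_type]
  rfl

/-- Conjugation covariance of the pairing. -/
lemma pfPair_conj (g A B : Matrix (Fin 4) (Fin 4) ℝ) :
    pfPair (gᵀ * A * g) (gᵀ * B * g) = g.det * pfPair A B := by
  have key : ∀ v : Fin 4 → Fin 4, (g.submatrix v id).det
      = ∑ τ : Equiv.Perm (Fin 4), ((Equiv.Perm.sign τ : ℤ) : ℝ) * ∏ i, g (v i) (τ i) := by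
    intro v
    rw [det_col_expand]
    simp [Matrix.submatrix_apply]
  have step1 : pfPair (gᵀ * A * g) (gᵀ * B * g)
      = ∑ v : Fin 4 → Fin 4, A (v 0) (v 1) * B (v 2) (v 3) * (g.submatrix v id).det := by
    unfold pfPair
    simp only [key, Finset.mul_sum]
    rw [Finset.sum_comm]
    refine Finset.sum_congr rfl fun τ _ => ?_
    rw [sum_fun_eq]
    simp only [Matrix.mul_apply, Matrix.transpose_apply, Fin.prod_univ_four,
      Matrix.cons_val_zero, Matrix.cons_val_one, Matrix.head_cons]
    have e2 : ∀ k l m n : Fin 4, (![k,l,m,n] : Fin 4 → Fin 4) 2 = m := fun _ _ _ _ => rfl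
    have e3 : ∀ k l m n : Fin 4, (![k,l,m,n] : Fin 4 → Fin 4) 3 = n := fun _ _ _ _ => rfl
    simp only [e2, e3]
    simp only [Fin.sum_univ_four]
    ring
  rw [step1]
  have h0 : ∀ v ∈ (Finset.univ : Finset (Fin 4 → Fin 4)),
      A (v 0) (v 1) * B (v 2) (v 3) * (g.submatrix v id).det ≠ 0 → Function.Bijective v := by
    intro v _ hne
    by_contra hbij
    apply hne
    have hinj : ¬ Function.Injective v := fun hi => hbij (Finite.injective_iff_bijective.mp hi)
    rw [Function.not_injective_iff] at hinj
    obtain ⟨i, j, hij, hne'⟩ := hinj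
    rw [Matrix.det_zero_of_row_eq hne' (by funext c; simp [Matrix.submatrix_apply, hij])]
    ring
  rw [← Finset.sum_filter_of_ne h0]
  have step2 : ∑ v ∈ Finset.univ.filter Function.Bijective,
      A (v 0) (v 1) * B (v 2) (v 3) * (g.submatrix v id).det
      = ∑ σ : Equiv.Perm (Fin 4),
          A (σ 0) (σ 1) * B (σ 2) (σ 3) * (g.submatrix σ id).det := by
    refine Finset.sum_bij (fun p hp => Equiv.ofBijective p (Finset.mem_filter.1 hp).2)
      (fun _ _ => Finset.mem_univ _) (fun _ _ _ _ hEq => by injection hEq)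
      (fun σ _ => ⟨⇑σ, Finset.mem_filter.2 ⟨Finset.mem_univ _, σ.bijective⟩,
        Equiv.coe_fn_injective rfl⟩) fun p hp => rfl
  rw [step2]
  unfold pfPair
  rw [Finset.mul_sum]
  refine Finset.sum_congr rfl fun σ _ => ?_
  rw [Matrix.det_permute]
  
  ring_nf

end ContractionMuAux

/-- Lemma 4.8 (pointwise form): for `h ∈ SO(4)` (`hᵀ h = 1`, `det h = 1`) and
skew-symmetric `X`, the contraction `-i_{X_G} μ(X)` vanishes, i.e.
`Σ_{τ ∈ S₄} sgn(τ) [ X_{τ(1)τ(2)} X_{τ(3)τ(4)} + X_{τ(3)τ(4)} X_{τ(1)τ(2)}`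
`+ (h⁻¹Xh)_{τ(1)τ(2)} X_{τ(3)τ(4)} + (h⁻¹Xh)_{τ(3)τ(4)} X_{τ(1)τ(2)}`
`− (hXh⁻¹)_{τ(1)τ(2)} X_{τ(3)τ(4)} − (hXh⁻¹)_{τ(3)τ(4)} X_{τ(1)τ(2)}`
`− X_{τ(1)τ(2)} X_{τ(3)τ(4)} − X_{τ(3)τ(4)} X_{τ(1)τ(2)} ] = 0` (indices 0-based). -/
theorem contraction_mu_vanishes (h X : Matrix (Fin 4) (Fin 4) ℝ)
    (hh : hᵀ * h = 1) (hdet : h.det = 1) (hX : Xᵀ = -X) :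
    ∑ τ : Equiv.Perm (Fin 4),
      ((Equiv.Perm.sign τ : ℤ) : ℝ) *
        (X (τ 0) (τ 1) * X (τ 2) (τ 3) + X (τ 2) (τ 3) * X (τ 0) (τ 1)
          + (h⁻¹ * X * h) (τ 0) (τ 1) * X (τ 2) (τ 3)
          + (h⁻¹ * X * h) (τ 2) (τ 3) * X (τ 0) (τ 1)
          - (h * X * h⁻¹) (τ 0) (τ 1) * X (τ 2) (τ 3)
          - (h * X * h⁻¹) (τ 2) (τ 3) * X (τ 0) (τ 1)
          - X (τ 0) (τ 1) * X (τ 2) (τ 3) - X (τ 2) (τ 3) * X (τ 0) (τ 1)) = 0 := by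
  have hinv : h⁻¹ = hᵀ := Matrix.inv_eq_left_inv hh
  have split : (∑ τ : Equiv.Perm (Fin 4),
      ((Equiv.Perm.sign τ : ℤ) : ℝ) *
        (X (τ 0) (τ 1) * X (τ 2) (τ 3) + X (τ 2) (τ 3) * X (τ 0) (τ 1)
          + (h⁻¹ * X * h) (τ 0) (τ 1) * X (τ 2) (τ 3)
          + (h⁻¹ * X * h) (τ 2) (τ 3) * X (τ 0) (τ 1)
          - (h * X * h⁻¹) (τ 0) (τ 1) * X (τ 2) (τ 3)
          - (h * X * h⁻¹) (τ 2) (τ 3) * X (τ 0) (τ 1)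
          - X (τ 0) (τ 1) * X (τ 2) (τ 3) - X (τ 2) (τ 3) * X (τ 0) (τ 1)))
      = pfPair (h⁻¹ * X * h) X + pfPair X (h⁻¹ * X * h)
        - pfPair (h * X * h⁻¹) X - pfPair X (h * X * h⁻¹) := by
    unfold pfPair
    rw [← Finset.sum_add_distrib, ← Finset.sum_sub_distrib, ← Finset.sum_sub_distrib]
    refine Finset.sum_congr rfl fun τ _ => ?_
    ring
  rw [split, hinv]
  have hXfix : hᵀ * (h * X * hᵀ) * h = X := by
    calc hᵀ * (h * X * hᵀ) * h = (hᵀ * h) * X * (hᵀ * h) := by noncomm_ring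
      _ = X := by rw [hh, Matrix.one_mul, Matrix.mul_one]
  have key : pfPair (hᵀ * X * h) X = pfPair (h * X * hᵀ) X := by
    have := pfPair_conj h X (h * X * hᵀ)
    rw [hXfix, hdet, one_mul] at this
    rw [this, pfPair_symm]
  rw [key, pfPair_symm X (hᵀ * X * h), key, pfPair_symm X (h * X * hᵀ)]
  ring
end

section
/- For 4 × 4 real matrices A, B let [A, B] := AB − BA, and let A_{ij} denote the (i,j) entry. Then for every h ∈ SO(4) (i.e. h^T h = I and det h = 1) and all skew-symmetric 4 × 4 real matrices X, B, C, setting u := X − h^{-1} X h, the following identity holds: (1/192π²) Σ_{τ ∈ S_4} sgn(τ) { u_{τ(1)τ(2)} [B,C]_{τ(3)τ(4)} − B_{τ(1)τ(2)} [u,C]_{τ(3)τ(4)} + C_{τ(1)τ(2)} [u,B]_{τ(3)τ(4)} + u_{τ(3)τ(4)} [B,C]_{τ(1)τ(2)} − B_{τ(3)τ(4)} [u,C]_{τ(1)τ(2)} + C_{τ(3)τ(4)} [u,B]_{τ(1)τ(2)} } = (1/64π²) Σ_{τ ∈ S_4} sgn(τ) { X_{τ(1)τ(2)} [B,C]_{τ(3)τ(4)}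 + X_{τ(3)τ(4)} [B,C]_{τ(1)τ(2)} − X_{τ(1)τ(2)} [hBh^{-1}, hCh^{-1}]_{τ(3)τ(4)} − X_{τ(3)τ(4)} [hBh^{-1}, hCh^{-1}]_{τ(1)τ(2)} }. -/
open Matrix Real Equiv

private lemma permsum_step {n : ℕ} (g : Equiv.Perm (Fin (n+1)) → ℝ) :
    ∑ τ : Equiv.Perm (Fin (n+1)), g τ =
      ∑ p : Fin (n+1) × Equiv.Perm (Fin n), g (Equiv.Perm.decomposeFin.symm p) :=
  (Equiv.Perm.decomposeFin.symm.sum_comp g).symm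

private lemma permsum_one (g : Equiv.Perm (Fin 1) → ℝ) :
    ∑ τ : Equiv.Perm (Fin 1), g τ = g 1 := by
  rw [Finset.sum_eq_single 1] <;> simp [Subsingleton.elim _ (1 : Equiv.Perm (Fin 1))]

private lemma perm4_expand (g : Fin 4 → Fin 4 → Fin 4 → Fin 4 → ℝ) :
  ∑ τ : Equiv.Perm (Fin 4), ((Equiv.Perm.sign τ : ℤ) : ℝ) * g (τ 0) (τ 1) (τ 2) (τ 3) =
    g 0 1 2 3 - g 0 1 3 2 - g 0 2 1 3 + g 0 2 3 1 + g 0 3 1 2 - g 0 3 2 1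
    - g 1 0 2 3 + g 1 0 3 2 + g 1 2 0 3 - g 1 2 3 0 - g 1 3 0 2 + g 1 3 2 0
    + g 2 0 1 3 - g 2 0 3 1 - g 2 1 0 3 + g 2 1 3 0 + g 2 3 0 1 - g 2 3 1 0
    - g 3 0 1 2 + g 3 0 2 1 + g 3 1 0 2 - g 3 1 2 0 - g 3 2 0 1 + g 3 2 1 0 := by
  rw [permsum_step, Fintype.sum_prod_type]
  simp only [permsum_step]
  simp only [Fintype.sum_prod_type]
  simp only [permsum_step]
  simp only [Fintype.sum_prod_type]
  simp only [permsum_one]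
  simp only [Equiv.Perm.decomposeFin.symm_sign,
    show (1 : Fin 4) = Fin.succ 0 from rfl, show (2 : Fin 4) = Fin.succ 1 from rfl,
    show (3 : Fin 4) = Fin.succ 2 from rfl,
    show (1 : Fin 3) = Fin.succ 0 from rfl, show (2 : Fin 3) = Fin.succ 1 from rfl,
    show (1 : Fin 2) = Fin.succ 0 from rfl,
    Equiv.Perm.decomposeFin_symm_apply_zero, Equiv.Perm.decomposeFin_symm_apply_succ,
    Equiv.Perm.one_apply]
  simp only [Fin.sum_univ_succ, Fin.sum_univ_zero,
    show (1 : Fin 4) = Fin.succ 0 from rfl, show (2 : Fin 4) = Fin.succ 1 from rfl,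
    show (3 : Fin 4) = Fin.succ 2 from rfl,
    show (1 : Fin 3) = Fin.succ 0 from rfl, show (2 : Fin 3) = Fin.succ 1 from rfl,
    show (1 : Fin 2) = Fin.succ 0 from rfl]
  norm_num [Equiv.swap_apply_def, Fin.ext_iff]
  ring

noncomputable def Pb (A D : Matrix (Fin 4) (Fin 4) ℝ) : ℝ :=
  ∑ τ : Equiv.Perm (Fin 4), ((Equiv.Perm.sign τ : ℤ) : ℝ) * (A (τ 0) (τ 1) * D (τ 2) (τ 3))

private lemma Pb_expand (A D : Matrix (Fin 4) (Fin 4) ℝ) : Pb A D =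
    A 0 1 * D 2 3 - A 0 1 * D 3 2 - A 0 2 * D 1 3 + A 0 2 * D 3 1 + A 0 3 * D 1 2 - A 0 3 * D 2 1 - A 1 0 * D 2 3 + A 1 0 * D 3 2 + A 1 2 * D 0 3 - A 1 2 * D 3 0 - A 1 3 * D 0 2 + A 1 3 * D 2 0 + A 2 0 * D 1 3 - A 2 0 * D 3 1 - A 2 1 * D 0 3 + A 2 1 * D 3 0 + A 2 3 * D 0 1 - A 2 3 * D 1 0 - A 3 0 * D 1 2 + A 3 0 * D 2 1 + A 3 1 * D 0 2 - A 3 1 * D 2 0 - A 3 2 * D 0 1 + A 3 2 * D 1 0 :=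
  perm4_expand (fun i j k l => A i j * D k l)


private lemma entry3 (g A : Matrix (Fin 4) (Fin 4) ℝ) (i j : Fin 4) :
    (gᵀ * A * g) i j = ∑ a : Fin 4, ∑ b : Fin 4, g a i * A a b * g b j := by
  simp only [Matrix.mul_apply, Matrix.transpose_apply, Finset.sum_mul, Finset.mul_sum]
  rw [Finset.sum_comm]

private lemma entry3' (g A : Matrix (Fin 4) (Fin 4) ℝ) (i j : Fin 4) :
    (gᵀ * A * g) i j =
      g 0 i * A 0 0 * g 0 j + g 0 i * A 0 1 * g 1 j + g 0 i * A 0 2 * g 2 j + g 0 i * A 0 3 * g 3 j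
    + g 1 i * A 1 0 * g 0 j + g 1 i * A 1 1 * g 1 j + g 1 i * A 1 2 * g 2 j + g 1 i * A 1 3 * g 3 j
    + g 2 i * A 2 0 * g 0 j + g 2 i * A 2 1 * g 1 j + g 2 i * A 2 2 * g 2 j + g 2 i * A 2 3 * g 3 j
    + g 3 i * A 3 0 * g 0 j + g 3 i * A 3 1 * g 1 j + g 3 i * A 3 2 * g 2 j + g 3 i * A 3 3 * g 3 j := by
  rw [entry3]
  simp only [Fin.sum_univ_succ, Fin.sum_univ_zero,
    show (Fin.succ 0 : Fin 4) = 1 from rfl, show (Fin.succ 1 : Fin 4) = 2 from rfl,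
    show (Fin.succ 2 : Fin 4) = 3 from rfl, show (Fin.succ 0 : Fin 3) = 1 from rfl,
    show (Fin.succ 1 : Fin 3) = 2 from rfl, show (Fin.succ 0 : Fin 2) = 1 from rfl]
  ring

private lemma det4 (M : Matrix (Fin 4) (Fin 4) ℝ) : M.det =
    ∑ τ : Equiv.Perm (Fin 4), ((Equiv.Perm.sign τ : ℤ) : ℝ) *
      (M (τ 0) 0 * (M (τ 1) 1 * (M (τ 2) 2 * M (τ 3) 3))) := by
  rw [Matrix.det_apply]
  refine Finset.sum_congr rfl fun τ _ => ?_
  rw [Fin.prod_univ_four]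
  rw [Units.smul_def, zsmul_eq_mul]
  push_cast
  ring

private lemma det4' (M : Matrix (Fin 4) (Fin 4) ℝ) : M.det =
    M 0 0 * (M 1 1 * (M 2 2 * M 3 3)) - M 0 0 * (M 1 1 * (M 3 2 * M 2 3)) - M 0 0 * (M 2 1 * (M 1 2 * M 3 3)) + M 0 0 * (M 2 1 * (M 3 2 * M 1 3)) + M 0 0 * (M 3 1 * (M 1 2 * M 2 3)) - M 0 0 * (M 3 1 * (M 2 2 * M 1 3)) - M 1 0 * (M 0 1 * (M 2 2 * M 3 3)) + M 1 0 * (M 0 1 * (M 3 2 * M 2 3)) + M 1 0 * (M 2 1 * (M 0 2 * M 3 3)) - M 1 0 * (M 2 1 * (M 3 2 * M 0 3)) - M 1 0 * (M 3 1 * (M 0 2 * M 2 3)) + M 1 0 * (M 3 1 * (M 2 2 * M 0 3)) + M 2 0 * (M 0 1 * (M 1 2 * M 3 3)) - M 2 0 * (M 0 1 * (M 3 2 * M 1 3)) - M 2 0 * (M 1 1 * (M 0 2 * M 3 3)) + M 2 0 * (M 1 1 * (M 3 2 * M 0 3)) + M 2 0 * (M 3 1 * (M 0 2 * M 1 3))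 - M 2 0 * (M 3 1 * (M 1 2 * M 0 3)) - M 3 0 * (M 0 1 * (M 1 2 * M 2 3)) + M 3 0 * (M 0 1 * (M 2 2 * M 1 3)) + M 3 0 * (M 1 1 * (M 0 2 * M 2 3)) - M 3 0 * (M 1 1 * (M 2 2 * M 0 3)) - M 3 0 * (M 2 1 * (M 0 2 * M 1 3)) + M 3 0 * (M 2 1 * (M 1 2 * M 0 3)) := by
  rw [det4]; exact perm4_expand (fun i j k l => M i 0 * (M j 1 * (M k 2 * M l 3)))

set_option maxHeartbeats 4000000 in
private lemma Pb_conj (g A D : Matrix (Fin 4) (Fin 4) ℝ) :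
    Pb (gᵀ * A * g) (gᵀ * D * g) = g.det * Pb A D := by
  simp only [Pb_expand, entry3', det4']
  ring

private lemma entry2' (A B : Matrix (Fin 4) (Fin 4) ℝ) (i j : Fin 4) :
    (A * B) i j = A i 0 * B 0 j + A i 1 * B 1 j + A i 2 * B 2 j + A i 3 * B 3 j := by
  rw [Matrix.mul_apply, Fin.sum_univ_four]

set_option maxHeartbeats 1000000 in
private lemma Pb_cyc (A B C : Matrix (Fin 4) (Fin 4) ℝ)
    (hA : Aᵀ = -A) (hB : Bᵀ = -B) (hC : Cᵀ = -C) :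
    Pb A (B * C - C * B) = Pb B (C * A - A * C) := by
  have hA' : ∀ i j, A j i = -A i j := fun i j => by
    have := congrFun (congrFun hA i) j; simpa using this
  have hB' : ∀ i j, B j i = -B i j := fun i j => by
    have := congrFun (congrFun hB i) j; simpa using this
  have hC' : ∀ i j, C j i = -C i j := fun i j => by
    have := congrFun (congrFun hC i) j; simpa using this
  have dA : ∀ i, A i i = 0 := fun i => by have := hA' i i; linarith
  have dB : ∀ i, B i i = 0 := fun i => by have := hB' i i; linarith
  have dC : ∀ i, C i i = 0 := fun i => by have := hC' i i; linarith
  simp only [Pb_expand, Matrix.sub_apply, entry2',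
    hA' 0 1, hA' 0 2, hA' 0 3, hA' 1 2, hA' 1 3, hA' 2 3,
    hB' 0 1, hB' 0 2, hB' 0 3, hB' 1 2, hB' 1 3, hB' 2 3,
    hC' 0 1, hC' 0 2, hC' 0 3, hC' 1 2, hC' 1 3, hC' 2 3,
    dA, dB, dC]
  ring

private lemma Pb_subleft (X Y D : Matrix (Fin 4) (Fin 4) ℝ) :
    Pb (X - Y) D = Pb X D - Pb Y D := by
  simp only [Pb_expand, Matrix.sub_apply]; ring

private lemma Pb_swap (A D E : Matrix (Fin 4) (Fin 4) ℝ) :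
    Pb A (D * E - E * D) = -(Pb A (E * D - D * E)) := by
  simp only [Pb_expand, Matrix.sub_apply]; ring

private lemma Pb_pairswap (A D : Matrix (Fin 4) (Fin 4) ℝ) :
    (∑ τ : Equiv.Perm (Fin 4), ((Equiv.Perm.sign τ : ℤ) : ℝ) * (A (τ 2) (τ 3) * D (τ 0) (τ 1)))
      = Pb A D := by
  refine (perm4_expand (fun i j k l => A k l * D i j)).trans ?_
  rw [Pb_expand]; ring

set_option maxHeartbeats 1000000 in
/-- Lemma 4.6 (pointwise form): `i_{X_G} E_{1,3} = dμ(X)` on `SO(4)`, evaluated at `h`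
on tangent vectors `hB`, `hC`, with `u := X − h⁻¹ X h` the value of the Maurer–Cartan
form on the generating vector field, and `[A, B] = AB − BA`. -/
theorem contraction_E13_eq_dmu (h X B C : Matrix (Fin 4) (Fin 4) ℝ)
    (hh : hᵀ * h = 1) (hdet : h.det = 1)
    (hX : Xᵀ = -X) (hB : Bᵀ = -B) (hC : Cᵀ = -C) :
    (1 / (192 * π ^ 2)) *
      ∑ τ : Equiv.Perm (Fin 4),
        ((Equiv.Perm.sign τ : ℤ) : ℝ) *
          ((X - h⁻¹ * X * h) (τ 0) (τ 1) * (B * C - C * B) (τ 2) (τ 3)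
            - B (τ 0) (τ 1)
                * ((X - h⁻¹ * X * h) * C - C * (X - h⁻¹ * X * h)) (τ 2) (τ 3)
            + C (τ 0) (τ 1)
                * ((X - h⁻¹ * X * h) * B - B * (X - h⁻¹ * X * h)) (τ 2) (τ 3)
            + (X - h⁻¹ * X * h) (τ 2) (τ 3) * (B * C - C * B) (τ 0) (τ 1)
            - B (τ 2) (τ 3)
                * ((X - h⁻¹ * X * h) * C - C * (X - h⁻¹ * X * h)) (τ 0) (τ 1)
            + C (τ 2) (τ 3)
                * ((X - h⁻¹ * X * h) * B - B * (X - h⁻¹ * X * h)) (τ 0) (τ 1))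
    = (1 / (64 * π ^ 2)) *
        ∑ τ : Equiv.Perm (Fin 4),
          ((Equiv.Perm.sign τ : ℤ) : ℝ) *
            (X (τ 0) (τ 1) * (B * C - C * B) (τ 2) (τ 3)
              + X (τ 2) (τ 3) * (B * C - C * B) (τ 0) (τ 1)
              - X (τ 0) (τ 1)
                  * ((h * B * h⁻¹) * (h * C * h⁻¹) - (h * C * h⁻¹) * (h * B * h⁻¹)) (τ 2) (τ 3)
              - X (τ 2) (τ 3)
                  * ((h * B * h⁻¹) * (h * C * h⁻¹) - (h * C * h⁻¹) * (h * B * h⁻¹)) (τ 0) (τ 1)) := by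
  have hinv : h⁻¹ = hᵀ := Matrix.inv_eq_left_inv hh
  rw [hinv]
  have hh2 : ∀ M : Matrix (Fin 4) (Fin 4) ℝ, hᵀ * (h * M) = M := fun M => by
    rw [← Matrix.mul_assoc, hh, Matrix.one_mul]
  have hmat : (h * B * hᵀ) * (h * C * hᵀ) - (h * C * hᵀ) * (h * B * hᵀ)
      = h * (B * C - C * B) * hᵀ := by
    simp only [Matrix.mul_sub, Matrix.sub_mul, Matrix.mul_assoc, hh2]
  rw [hmat]
  have hskewu : (X - hᵀ * X * h)ᵀ = -(X - hᵀ * X * h) := by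
    simp only [Matrix.transpose_sub, Matrix.transpose_mul, Matrix.transpose_transpose, hX,
      Matrix.neg_mul, Matrix.mul_neg, Matrix.mul_assoc]
    abel
  set u := X - hᵀ * X * h with hu
  have r1 : (∑ τ : Equiv.Perm (Fin 4), ((Equiv.Perm.sign τ : ℤ) : ℝ) *
      (u (τ 0) (τ 1) * (B * C - C * B) (τ 2) (τ 3))) = Pb u (B * C - C * B) := rfl
  have r2 : (∑ τ : Equiv.Perm (Fin 4), ((Equiv.Perm.sign τ : ℤ) : ℝ) *
      (B (τ 0) (τ 1) * (u * C - C * u) (τ 2) (τ 3))) = Pb B (u * C - C * u) := rfl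
  have r3 : (∑ τ : Equiv.Perm (Fin 4), ((Equiv.Perm.sign τ : ℤ) : ℝ) *
      (C (τ 0) (τ 1) * (u * B - B * u) (τ 2) (τ 3))) = Pb C (u * B - B * u) := rfl
  have r4 := Pb_pairswap u (B * C - C * B)
  have r5 := Pb_pairswap B (u * C - C * u)
  have r6 := Pb_pairswap C (u * B - B * u)
  have r7 : (∑ τ : Equiv.Perm (Fin 4), ((Equiv.Perm.sign τ : ℤ) : ℝ) *
      (X (τ 0) (τ 1) * (B * C - C * B) (τ 2) (τ 3))) = Pb X (B * C - C * B) := rfl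
  have r8 := Pb_pairswap X (B * C - C * B)
  have r9 : (∑ τ : Equiv.Perm (Fin 4), ((Equiv.Perm.sign τ : ℤ) : ℝ) *
      (X (τ 0) (τ 1) * (h * (B * C - C * B) * hᵀ) (τ 2) (τ 3)))
      = Pb X (h * (B * C - C * B) * hᵀ) := rfl
  have r10 := Pb_pairswap X (h * (B * C - C * B) * hᵀ)
  have mulsubR : ∀ s a b : ℝ, s * (a - b) = s * a - s * b := fun _ _ _ => mul_sub _ _ _
  have muladdR : ∀ s a b : ℝ, s * (a + b) = s * a + s * b := fun _ _ _ => mul_add _ _ _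
  simp only [mulsubR, muladdR, Finset.sum_sub_distrib, Finset.sum_add_distrib]
  rw [r1, r2, r3, r4, r5, r6, r7, r8, r9, r10]
  have c1 : Pb B (u * C - C * u) = -(Pb u (B * C - C * B)) :=
    (Pb_cyc B u C hB hskewu hC).trans (Pb_swap u C B)
  have c2 : Pb C (u * B - B * u) = Pb u (B * C - C * B) :=
    Pb_cyc C u B hC hskewu hB
  have c3 : Pb u (B * C - C * B) = Pb X (B * C - C * B) - Pb (hᵀ * X * h) (B * C - C * B) := by
    rw [hu]; exact Pb_subleft _ _ _
  have c4 : Pb (hᵀ * X * h) (B * C - C * B) = Pb X (h * (B * C - C * B) * hᵀ) := by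
    have e := Pb_conj h X (h * (B * C - C * B) * hᵀ)
    have cancel : hᵀ * (h * (B * C - C * B) * hᵀ) * h = B * C - C * B := by
      simp only [Matrix.mul_assoc, hh, Matrix.mul_one, hh2]
    rwa [cancel, hdet, one_mul] at e
  rw [c1, c2, c3, c4]
  ring
end
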